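/- For the Chebyshev coefficients c_0 = 1, c_k = (−1)^{k+1}·2/(4k²−1) (k ≥ 1) of y(t) = (π/4)√(2(t+1)), the pole λ_p = (c'_p + c_{p+2})/(2c_{p+1}) of the (p,1) Chebyshev–Padé approximant equals λ_p = −1 − 3/((p−1/2)(p+5/2)) for all p ≥ 1. In particular λ_p < −1 and λ_p → −1 as p → ∞. -/

import Mathlib

open Filter

/-- The exact Chebyshev coefficients of `y(t) = (π/4)·√(2(t+1))`. -/
noncomputable def chebCoeff : ℕ → ℝ :=
  fun k => if k = 0 then 1 else (-1 : ℝ) ^ (k + 1) * (2 / (4 * (k : ℝ) ^ 2 - 1))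

/-- Pole of the `(p,1)` Chebyshev–Padé approximant (for `p ≥ 1`, `c'_p = c_p`). -/
noncomputable def chebPole : ℕ → ℝ :=
  fun p => (chebCoeff p + chebCoeff (p + 2)) / (2 * chebCoeff (p + 1))

noncomputable def poleFormula (x : ℝ) : ℝ :=
  -1 - 3 / ((x - 1 / 2) * (x + 5 / 2))

lemma chebCoeff_of_ne_zero {k : ℕ} (hk : k ≠ 0) :
    chebCoeff k = (-1 : ℝ) ^ (k + 1) * (2 / (4 * (k : ℝ) ^ 2 - 1)) :=
  if_neg hk

-- The signs of `c_p, c_{p+1}, c_{p+2}` alternate, so they cancel in the quotient.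
lemma chebPole_eq_of_ne_zero {p : ℕ} (hp : p ≠ 0) :
    chebPole p = -(4 * ((p : ℝ) + 1) ^ 2 - 1) / 2 *
      (1 / (4 * (p : ℝ) ^ 2 - 1) + 1 / (4 * ((p : ℝ) + 2) ^ 2 - 1)) := by
  have hp1 : (1 : ℝ) ≤ p := by exact_mod_cast Nat.one_le_iff_ne_zero.mpr hp
  have h₀ : 4 * (p : ℝ) ^ 2 - 1 ≠ 0 := by nlinarith
  have h₁ : 4 * ((p : ℝ) + 1) ^ 2 - 1 ≠ 0 := by nlinarith
  have h₂ : 4 * ((p : ℝ) + 2) ^ 2 - 1 ≠ 0 := by nlinarith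
  rw [chebPole, chebCoeff_of_ne_zero hp, chebCoeff_of_ne_zero p.succ_ne_zero,
    chebCoeff_of_ne_zero (p + 1).succ_ne_zero, pow_succ (-1 : ℝ) (p + 1 + 1),
    pow_succ (-1 : ℝ) (p + 1)]
  push_cast
  rw [show (p : ℝ) + 1 + 1 = p + 2 by ring]
  field_simp

lemma poleFormula_eq {x : ℝ} (hx : 1 / 2 < x) :
    poleFormula x = -(4 * (x + 1) ^ 2 - 1) / 2 * (1 / (4 * x ^ 2 - 1) + 1 / (4 * (x + 2) ^ 2 - 1)) := by
  have h₁ : 2 * x - 1 ≠ 0 := by linarith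
  have h₂ : 2 * x + 1 ≠ 0 := by linarith
  have h₃ : 2 * x + 3 ≠ 0 := by linarith
  have h₄ : 2 * x + 5 ≠ 0 := by linarith
  rw [poleFormula, show 4 * x ^ 2 - 1 = (2 * x - 1) * (2 * x + 1) by ring,
    show 4 * (x + 2) ^ 2 - 1 = (2 * x + 3) * (2 * x + 5) by ring,
    show (x - 1 / 2) * (x + 5 / 2) = (2 * x - 1) * (2 * x + 5) / 4 by ring]
  field_simp
  ring

lemma poleFormula_lt_neg_one {x : ℝ} (hx : 1 / 2 < x) : poleFormula x < -1 := by
  have : 0 < 3 / ((x - 1 / 2) * (x + 5 / 2)) :=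
    div_pos three_pos (mul_pos (by linarith) (by linarith))
  rw [poleFormula]
  linarith

lemma tendsto_poleFormula_atTop : Tendsto poleFormula atTop (nhds (-1)) := by
  have hden : Tendsto (fun x : ℝ => (x - 1 / 2) * (x + 5 / 2)) atTop atTop :=
    (tendsto_atTop_add_const_right _ _ tendsto_id).atTop_mul_atTop₀
      (tendsto_atTop_add_const_right _ _ tendsto_id)
  have h := (tendsto_const_nhds (x := (-1 : ℝ))).sub
    ((tendsto_const_nhds (x := (3 : ℝ))).div_atTop hden)
  rwa [sub_zero] at h

lemma one_half_lt_natCast {p : ℕ} (hp : 1 ≤ p) : (1 / 2 : ℝ) < p := by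
  have : (1 : ℝ) ≤ p := by exact_mod_cast hp
  linarith

lemma chebPole_eq_poleFormula {p : ℕ} (hp : 1 ≤ p) : chebPole p = poleFormula p := by
  rw [chebPole_eq_of_ne_zero (by omega), poleFormula_eq (one_half_lt_natCast hp)]

/-- for the Chebyshev coefficients of `(π/4)√(2(t+1))`, the pole of the `(p,1)`
Chebyshev–Padé approximant equals `−1 − 3/((p−1/2)(p+5/2))` for all `p ≥ 1`; in particular
`λ_p < −1` and `λ_p → −1` as `p → ∞`. -/
theorem chebyshev_pade_pole_formula :
    (∀ p : ℕ, 1 ≤ p →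
      chebPole p = -1 - 3 / (((p : ℝ) - 1 / 2) * ((p : ℝ) + 5 / 2))) ∧
    (∀ p : ℕ, 1 ≤ p → chebPole p < -1) ∧
    Tendsto chebPole atTop (nhds (-1)) := by
  refine ⟨fun p hp => chebPole_eq_poleFormula hp, fun p hp => ?_, ?_⟩
  · rw [chebPole_eq_poleFormula hp]
    exact poleFormula_lt_neg_one (one_half_lt_natCast hp)
  · refine (tendsto_poleFormula_atTop.comp tendsto_natCast_atTop_atTop).congr' ?_
    filter_upwards [eventually_ge_atTop 1] with p hp
    exact (chebPole_eq_poleFormula hp).symm
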